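/- arXiv:1708.00614 — 5 statements merged into one kernel-verified Lean document; each statement's English description precedes it below -/
import Mathlib

section
/- Let H be a finite-dimensional real Hilbert space and X, Y linear subspaces with X ⊕ Y = H (direct sum). Let F : H → H be the oblique projection onto X along Y (i.e., F is linear, F² = F, range F = X, ker F = Y). Then F = P_X ((1 - P_Y) P_X)† (1 - P_Y), where P_X, P_Y are the orthogonal projections onto X and Y, and † denotes the Moore-Penrose inverse. -/
/-!
The kernel of `A = (1 - P_Y) P_X` is `Xᗮ`, since `X ∩ Y = 0`. The Penrose equations `ABA = A` and
`(BA)* = BA` make `BA` a self-adjoint idempotent with the same kernel as `A`, so `BA = P_X`.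
For `x ∈ X` we have `(1 - P_Y) x = A x`, hence `P_X B (1 - P_Y) x = P_X (BA) x = x`, while
`1 - P_Y` kills `Y`. The oblique projection `F` acts in the same way on `X` and on `Y`.
-/

open ContinuousLinearMap Submodule

theorem LinearMap.ker_mul_eq_ker_of_mul_mul_eq {R M : Type*} [Semiring R] [AddCommMonoid M]
    [Module R M] {A B : Module.End R M} (hABA : A * B * A = A) : ker (B * A) = ker A := by
  refine le_antisymm (fun v hv ↦ ?_) (fun v hv ↦ ?_)
  · rw [mem_ker, ← hABA, mul_assoc, Module.End.mul_apply]
    simp_all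
  · simp_all

section

variable {𝕜 E : Type*} [RCLike 𝕜] [NormedAddCommGroup E] [InnerProductSpace 𝕜 E]

theorem ContinuousLinearMap.mul_eq_starProjection_of_ker_eq_orthogonal [CompleteSpace E]
    {A B : E →L[𝕜] E} (hABA : A * B * A = A) (hBA : IsSelfAdjoint (B * A))
    {K : Submodule 𝕜 E} [K.HasOrthogonalProjection] (hK : LinearMap.ker (A : E →ₗ[𝕜] E) = Kᗮ) :
    B * A = K.starProjection := by
  have hP : IsStarProjection (B * A) :=
    ⟨by rw [IsIdempotentElem, mul_assoc, ← mul_assoc A, hABA], hBA⟩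
  suffices 1 - B * A = Kᗮ.starProjection by rwa [starProjection_orthogonal', sub_right_inj] at this
  refine hP.one_sub.ext isStarProjection_starProjection ?_
  have hker := LinearMap.ker_mul_eq_ker_of_mul_mul_eq (A := (A : E →ₗ[𝕜] E)) (B := B)
    (by rw [← toLinearMap_mul, ← toLinearMap_mul, hABA])
  rw [range_starProjection, ← hK, ← hker, ← toLinearMap_mul,
    LinearMap.IsIdempotentElem.ker_eq_range_one_sub hP.isIdempotentElem.toLinearMap]
  rfl

theorem Submodule.ker_one_sub_starProjection_mul_starProjection {X Y : Submodule 𝕜 E}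
    [X.HasOrthogonalProjection] [Y.HasOrthogonalProjection] (hXY : Disjoint X Y) :
    LinearMap.ker (((1 - Y.starProjection) * X.starProjection : E →L[𝕜] E) : E →ₗ[𝕜] E) = Xᗮ := by
  ext v
  rw [LinearMap.mem_ker, coe_coe, mul_apply_eq_comp, sub_apply, one_apply_eq_self, sub_eq_zero,
    eq_comm, starProjection_eq_self_iff, ← ker_starProjection X, LinearMap.mem_ker, coe_coe]
  exact ⟨fun hY ↦ hXY.le_bot ⟨starProjection_apply_mem X v, hY⟩, fun h ↦ h ▸ Y.zero_mem⟩

end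

theorem stmt_0_general {H : Type*} [NormedAddCommGroup H] [InnerProductSpace ℝ H]
    [FiniteDimensional ℝ H]
    (X Y : Submodule ℝ H) (hXY : IsCompl X Y)
    (F : H →L[ℝ] H)
    (hF2 : F * F = F)
    (hFran : LinearMap.range (F : H →ₗ[ℝ] H) = X)
    (hFker : LinearMap.ker (F : H →ₗ[ℝ] H) = Y)
    (PX PY A B : H →L[ℝ] H)
    (hPX : ∀ v, PX v = (Submodule.orthogonalProjectionOnto X v : H))
    (hPY : ∀ v, PY v = (Submodule.orthogonalProjectionOnto Y v : H))
    (hA : A = (1 - PY) * PX)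
    (h1 : A * B * A = A)
    (h4 : ContinuousLinearMap.adjoint (B * A) = B * A) :
    F = PX * B * (1 - PY) := by
  obtain rfl : PX = X.starProjection := ext hPX
  obtain rfl : PY = Y.starProjection := ext hPY
  have hBA : B * A = X.starProjection := mul_eq_starProjection_of_ker_eq_orthogonal h1 h4
    (hA ▸ ker_one_sub_starProjection_mul_starProjection hXY.disjoint)
  refine LinearMap.ext_on_codisjoint hXY.codisjoint (fun x hx ↦ ?_) (fun y hy ↦ ?_)
  · have hFx : F x = x := (LinearMap.IsIdempotentElem.mem_range_iff
      (IsIdempotentElem.toLinearMap (f := F) hF2)).1 (hFran ▸ hx)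
    have hAx : (1 - Y.starProjection) x = A x := by
      rw [hA, mul_apply_eq_comp, starProjection_eq_self_iff.2 hx]
    calc F x = X.starProjection ((B * A) x) := by
          rw [hFx, hBA, starProjection_eq_self_iff.2 hx, starProjection_eq_self_iff.2 hx]
      _ = (X.starProjection * B * (1 - Y.starProjection)) x := by
          rw [mul_apply_eq_comp, mul_apply_eq_comp, mul_apply_eq_comp, hAx]
  · have hFy : F y = 0 := (hFker ▸ hy : y ∈ LinearMap.ker (F : H →ₗ[ℝ] H))
    rw [hFy, mul_apply_eq_comp, sub_apply, one_apply_eq_self, starProjection_eq_self_iff.2 hy,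
      sub_self, map_zero]

/-- If `H` is a finite-dimensional real Hilbert space, `X ⊕ Y = H`,
and `F` is the oblique projection onto `X` along `Y` (`F² = F`, range `F = X`,
ker `F = Y`), then `F = P_X ((1 - P_Y) P_X)† (1 - P_Y)`, where `B` is the
Moore-Penrose inverse of `A = (1 - P_Y) P_X`, characterized by the four Penrose
equations. -/
theorem stmt_0 {H : Type*} [NormedAddCommGroup H] [InnerProductSpace ℝ H]
    [FiniteDimensional ℝ H]
    (X Y : Submodule ℝ H) (hXY : IsCompl X Y)
    (F : H →L[ℝ] H)
    (hF2 : F * F = F)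
    (hFran : LinearMap.range (F : H →ₗ[ℝ] H) = X)
    (hFker : LinearMap.ker (F : H →ₗ[ℝ] H) = Y)
    (PX PY A B : H →L[ℝ] H)
    (hPX : ∀ v, PX v = (Submodule.orthogonalProjectionOnto X v : H))
    (hPY : ∀ v, PY v = (Submodule.orthogonalProjectionOnto Y v : H))
    (hA : A = (1 - PY) * PX)
    (h1 : A * B * A = A) (h2 : B * A * B = B)
    (h3 : ContinuousLinearMap.adjoint (A * B) = A * B)
    (h4 : ContinuousLinearMap.adjoint (B * A) = B * A) :
    F = PX * B * (1 - PY) :=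
  stmt_0_general X Y hXY F hF2 hFran hFker PX PY A B hPX hPY hA h1 h4
end

section
/- Let U be an n-dimensional real vector space with a complete flag (Fⱼ), W a subspace, Xⱼ ∈ Fⱼ \ Fⱼ₋₁ for each j, and let e = jump(W) = {j : Fⱼ ⊄ W + Fⱼ₋₁}. Then the cardinality of e equals dim(U/W), and W ⊕ span{Xⱼ : j ∈ e} = U (direct sum). -/
open Module in
/-- With a complete flag `(Fⱼ)`, a subspace `W` with jump set
`e = {j ∈ {1,…,n} : Fⱼ ⊄ W + Fⱼ₋₁}`, and `Xⱼ ∈ Fⱼ \ Fⱼ₋₁`: the cardinality of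
`e` equals `dim(U/W)`, and `W ⊕ span{Xⱼ : j ∈ e} = U`. -/
theorem stmt_7 {U : Type*} [AddCommGroup U] [Module ℝ U] [FiniteDimensional ℝ U]
    (n : ℕ) (hn : finrank ℝ U = n)
    (F : ℕ → Submodule ℝ U)
    (hdim : ∀ j ≤ n, finrank ℝ (F j) = j)
    (hmono : ∀ j < n, F j ≤ F (j + 1))
    (htop : F n = ⊤)
    (W : Submodule ℝ U)
    (X : ℕ → U)
    (hX : ∀ j, 1 ≤ j → j ≤ n → X j ∈ F j ∧ X j ∉ F (j - 1))
    (e : Set ℕ) (he : e = {j | 1 ≤ j ∧ j ≤ n ∧ ¬ F j ≤ W ⊔ F (j - 1)})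
    (Ue : Submodule ℝ U) (hUe : Ue = Submodule.span ℝ (X '' e)) :
    e.ncard = finrank ℝ (U ⧸ W) ∧ W ⊓ Ue = ⊥ ∧ W ⊔ Ue = ⊤ := by
  classical
  subst he hUe
  set s : Finset ℕ := (Finset.Icc 1 n).filter (fun j => ¬ F j ≤ W ⊔ F (j - 1)) with hs
  have hes : {j | 1 ≤ j ∧ j ≤ n ∧ ¬ F j ≤ W ⊔ F (j - 1)} = ↑s := by
    ext j
    simp [hs, Finset.mem_filter, Finset.mem_Icc, and_assoc]
  rw [hes]
  set Ue := Submodule.span ℝ (X '' ↑s) with hUe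
  -- F 0 = ⊥
  have hF0 : F 0 = ⊥ := by
    have h0 := hdim 0 (Nat.zero_le n)
    exact Submodule.finrank_eq_zero.mp h0
  -- If j+1 ∈ jumps, F (j+1) = F j ⊔ span {X (j+1)}
  have hstep : ∀ j, j + 1 ≤ n → F (j + 1) = F j ⊔ Submodule.span ℝ {X (j + 1)} := by
    intro j hj
    have hXj := hX (j + 1) (Nat.le_add_left 1 j) hj
    have hle : F j ⊔ Submodule.span ℝ {X (j + 1)} ≤ F (j + 1) := by
      apply sup_le (hmono j hj)
      rw [Submodule.span_singleton_le_iff_mem]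
      exact hXj.1
    have hlt : F j < F j ⊔ Submodule.span ℝ {X (j + 1)} := by
      refine lt_of_le_of_ne le_sup_left ?_
      intro hcontra
      apply hXj.2
      simp only [Nat.add_sub_cancel]
      rw [hcontra]
      exact le_sup_right (α := Submodule ℝ U) (Submodule.mem_span_singleton_self _)
    have h1 : finrank ℝ (F j) < finrank ℝ ↥(F j ⊔ Submodule.span ℝ {X (j + 1)}) :=
      Submodule.finrank_lt_finrank_of_lt hlt
    rw [hdim j (le_of_lt hj)] at h1
    refine (Submodule.eq_of_le_of_finrank_le hle ?_).symm
    rw [hdim (j + 1) hj]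
    exact h1
  -- the sup claim: F j ≤ W ⊔ Ue
  have hsupF : ∀ j, j ≤ n → F j ≤ W ⊔ Ue := by
    intro j
    induction j with
    | zero => intro _; rw [hF0]; exact bot_le
    | succ k ih =>
      intro hk
      have ihk := ih (le_of_lt hk)
      by_cases hmem : (k + 1) ∈ s
      · rw [hstep k hk]
        apply sup_le ihk
        refine le_trans ?_ le_sup_right
        apply Submodule.span_mono
        intro x hx
        rw [Set.mem_singleton_iff] at hx
        exact ⟨k + 1, by simpa using hmem, hx.symm⟩
      · have : F (k + 1) ≤ W ⊔ F k := by
          by_contra hcontra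
          apply hmem
          simp only [hs, Finset.mem_filter, Finset.mem_Icc]
          exact ⟨⟨Nat.le_add_left 1 k, hk⟩, by simpa using hcontra⟩
        calc F (k + 1) ≤ W ⊔ F k := this
          _ ≤ W ⊔ (W ⊔ Ue) := sup_le_sup_left ihk W
          _ = W ⊔ Ue := by rw [← sup_assoc, sup_idem]
  have hsupTop : W ⊔ Ue = ⊤ := by
    refine top_unique ?_
    rw [← htop]
    exact hsupF n le_rfl
  -- counting claim
  have hcount : ∀ j, j ≤ n →
      finrank ℝ W + (s.filter (· ≤ j)).card ≤ finrank ℝ ↥(W ⊔ F j) := by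
    intro j
    induction j with
    | zero =>
      intro _
      have h1 : s.filter (· ≤ 0) = ∅ := by
        apply Finset.filter_eq_empty_iff.mpr
        intro i hi
        simp only [hs, Finset.mem_filter, Finset.mem_Icc] at hi
        omega
      rw [h1, Finset.card_empty, add_zero, hF0, sup_bot_eq]
    | succ k ih =>
      intro hk
      have ihk := ih (le_of_lt hk)
      have hWmono : W ⊔ F k ≤ W ⊔ F (k + 1) := sup_le_sup_left (hmono k hk) W
      by_cases hmem : (k + 1) ∈ s
      · have hfilt : (s.filter (· ≤ k + 1)).card ≤ (s.filter (· ≤ k)).card + 1 := by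
          have hsub : s.filter (· ≤ k + 1) ⊆ insert (k + 1) (s.filter (· ≤ k)) := by
            intro i hi
            simp only [Finset.mem_filter] at hi
            rcases Nat.lt_or_ge i (k + 1) with h | h
            · exact Finset.mem_insert_of_mem (Finset.mem_filter.mpr ⟨hi.1, Nat.lt_succ_iff.mp h⟩)
            · have hik : i = k + 1 := le_antisymm hi.2 h
              rw [hik]
              exact Finset.mem_insert_self _ _
          calc (s.filter (· ≤ k + 1)).card ≤ (insert (k + 1) (s.filter (· ≤ k))).card :=
                Finset.card_le_card hsub
            _ ≤ (s.filter (· ≤ k)).card + 1 := Finset.card_insert_le _ _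
        have hjump : ¬ F (k + 1) ≤ W ⊔ F k := by
          simp only [hs, Finset.mem_filter, Finset.mem_Icc] at hmem
          simpa using hmem.2
        have hlt : W ⊔ F k < W ⊔ F (k + 1) := by
          refine lt_of_le_of_ne hWmono ?_
          intro hcontra
          exact hjump (le_trans le_sup_right (le_of_eq hcontra.symm))
        have hrk : finrank ℝ ↥(W ⊔ F k) < finrank ℝ ↥(W ⊔ F (k + 1)) :=
          Submodule.finrank_lt_finrank_of_lt hlt
        omega
      · have hfilt : (s.filter (· ≤ k + 1)).card ≤ (s.filter (· ≤ k)).card := by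
          apply Finset.card_le_card
          intro i hi
          simp only [Finset.mem_filter] at hi ⊢
          refine ⟨hi.1, ?_⟩
          rcases Nat.lt_or_ge i (k + 1) with h | h
          · exact Nat.lt_succ_iff.mp h
          · exact absurd (le_antisymm hi.2 h ▸ hi.1) hmem
        have hrk : finrank ℝ ↥(W ⊔ F k) ≤ finrank ℝ ↥(W ⊔ F (k + 1)) :=
          Submodule.finrank_mono hWmono
        omega
  -- |s| ≤ codim W
  have hcard_le : finrank ℝ W + s.card ≤ n := by
    have h1 := hcount n le_rfl
    have h2 : s.filter (· ≤ n) = s := by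
      apply Finset.filter_true_of_mem
      intro i hi
      simp only [hs, Finset.mem_filter, Finset.mem_Icc] at hi
      exact hi.1.2
    rw [h2, htop, sup_top_eq, finrank_top, hn] at h1
    exact h1
  -- dim Ue ≤ |s|
  have hUe_le : finrank ℝ Ue ≤ s.card := by
    have h1 : X '' ↑s = ↑(s.image X) := by simp [Finset.coe_image]
    rw [hUe, h1]
    have h2 : ((s.image X : Finset U) : Set U).finrank ℝ ≤ (s.image X).card :=
      finrank_span_finset_le_card (s.image X)
    have h3 : ((s.image X : Finset U) : Set U).finrank ℝ
        = finrank ℝ (Submodule.span ℝ ((s.image X : Finset U) : Set U)) := rfl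
    rw [h3] at h2
    exact h2.trans Finset.card_image_le
  -- quotient dimension
  have hquot : finrank ℝ (U ⧸ W) + finrank ℝ W = n := by
    rw [W.finrank_quotient_add_finrank, hn]
  -- main dimension equation
  have hsupinf := Submodule.finrank_sup_add_finrank_inf_eq W Ue
  rw [hsupTop, finrank_top, hn] at hsupinf
  have hinf0 : finrank ℝ ↥(W ⊓ Ue) = 0 := by omega
  have hinfbot : W ⊓ Ue = ⊥ := Submodule.finrank_eq_zero.mp hinf0
  have hcard_eq : s.card = finrank ℝ (U ⧸ W) := by omega
  refine ⟨?_, hinfbot, hsupTop⟩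
  rw [Set.ncard_coe_finset]
  exact hcard_eq
end

section
/- Let U be an n-dimensional real vector space with a complete flag (Fⱼ), W a subspace with jump set e, and Xⱼ ∈ Fⱼ \ Fⱼ₋₁. Then the family (Xⱼ + W)_{j ∈ e} is a basis of the quotient space U/W. -/
/-! Let `π : U → U ⧸ W`. Each step `F (j - 1) < F j` of the flag has codimension one, so
`F j = F (j - 1) + ℝ Xⱼ`: a subspace containing `F (j - 1)` contains `F j` iff it contains `Xⱼ`.
In particular `F j ≤ W ⊔ F (j - 1)` iff `Xⱼ ∈ W ⊔ F (j - 1)`, i.e. iff `j ∉ e`. Climbing the flag,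
`W` and the `Xⱼ` with `j ∈ e` span `F n = U`. The family is independent because it is
triangular: for `j ∈ e` the vector `π Xⱼ` avoids `π (F (j - 1))`, which contains every earlier
`π Xᵢ`. -/

open Module Submodule Set

section

variable {K V : Type*} [DivisionRing K] [AddCommGroup V] [Module K V]

theorem linearIndepOn_of_notMem_span_image_Iio {v : ℕ → V} {s : Set ℕ}
    (h : ∀ j ∈ s, v j ∉ span K (v '' (s ∩ Iio j))) : LinearIndepOn K v s := by
  have hIio : ∀ m, LinearIndepOn K v (s ∩ Iio m) := by
    intro m
    induction m with
    | zero => simp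
    | succ m ih =>
      rw [← Order.succ_eq_add_one, Order.Iio_succ_eq_insert]
      by_cases hm : m ∈ s
      · rw [inter_insert_of_mem hm]
        exact (linearIndepOn_insert (by simp)).2 ⟨ih, h m hm⟩
      · rwa [inter_insert_of_notMem hm]
  have hs : s = ⋃ m, s ∩ Iio m := by
    ext j
    simpa using fun _ => ⟨j + 1, j.lt_succ_self⟩
  rw [hs]
  exact linearIndepOn_iUnion_of_directed
    (Monotone.directed_le fun _ _ h => inter_subset_inter_right _ (Iio_subset_Iio h)) hIio

theorem Submodule.le_iff_mem_of_finrank_eq_succ [FiniteDimensional K V]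
    {p q r : Submodule K V} {x : V} (hpq : p ≤ q) (hrank : finrank K q = finrank K p + 1)
    (hxq : x ∈ q) (hxp : x ∉ p) (hpr : p ≤ r) : q ≤ r ↔ x ∈ r := by
  have hq : q = p ⊔ span K {x} := by
    refine (eq_of_le_of_finrank_le (sup_le hpq ((span_singleton_le_iff_mem _ _).2 hxq)) ?_).symm
    rw [finrank_sup_span_singleton hxp, hrank]
  rw [hq, sup_le_iff, span_singleton_le_iff_mem]
  exact and_iff_right hpr

def jumpSet (F : ℕ → Submodule K V) (W : Submodule K V) (n : ℕ) : Set ℕ :=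
  {j | 1 ≤ j ∧ j ≤ n ∧ ¬ F j ≤ W ⊔ F (j - 1)}

variable [FiniteDimensional K V] {n : ℕ} {F : ℕ → Submodule K V} {W : Submodule K V}

theorem flag_le_iff_mem (hdim : ∀ j ≤ n, finrank K (F j) = j)
    (hmono : ∀ j < n, F j ≤ F (j + 1)) {x : V} {j : ℕ} (h1 : 1 ≤ j) (hjn : j ≤ n)
    (hx : x ∈ F j ∧ x ∉ F (j - 1)) {r : Submodule K V} (hr : F (j - 1) ≤ r) :
    F j ≤ r ↔ x ∈ r := by
  have hle : F (j - 1) ≤ F j := by simpa [Nat.sub_add_cancel h1] using hmono (j - 1) (by omega)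
  have hrank : finrank K (F j) = finrank K (F (j - 1)) + 1 := by
    rw [hdim j hjn, hdim (j - 1) (by omega)]
    omega
  exact le_iff_mem_of_finrank_eq_succ hle hrank hx.1 hx.2 hr

section Flag

variable (hdim : ∀ j ≤ n, finrank K (F j) = j) (hmono : ∀ j < n, F j ≤ F (j + 1))
  {X : ℕ → V} (hX : ∀ j, 1 ≤ j → j ≤ n → X j ∈ F j ∧ X j ∉ F (j - 1))
include hdim hmono hX

theorem notMem_sup_of_mem_jumpSet {j : ℕ} (hj : j ∈ jumpSet F W n) : X j ∉ W ⊔ F (j - 1) :=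
  fun hmem => hj.2.2 <|
    (flag_le_iff_mem hdim hmono hj.1 hj.2.1 (hX j hj.1 hj.2.1) le_sup_right).2 hmem

theorem flag_le_of_forall_mem_jumpSet {S : Submodule K V} (hWS : W ≤ S)
    (hXS : ∀ j ∈ jumpSet F W n, X j ∈ S) : ∀ j ≤ n, F j ≤ S := by
  intro j hjn
  induction j with
  | zero => simp [Submodule.finrank_eq_zero.mp (hdim 0 (Nat.zero_le n))]
  | succ j ih =>
    have hFj : F j ≤ S := ih (by omega)
    by_cases hj : j + 1 ∈ jumpSet F W n
    · exact (flag_le_iff_mem hdim hmono (by omega) hjn (hX _ (by omega) hjn) hFj).2 (hXS _ hj)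
    · have hjump : F (j + 1) ≤ W ⊔ F j := by simpa [jumpSet, hjn] using hj
      exact hjump.trans (sup_le hWS hFj)

theorem linearIndepOn_mkQ_jumpSet : LinearIndepOn K (W.mkQ ∘ X) (jumpSet F W n) := by
  refine linearIndepOn_of_notMem_span_image_Iio fun j hj hmem => ?_
  have hF : MonotoneOn F (Iic n) := monotoneOn_of_le_succ ordConnected_Iic
    fun i _ _ hi => by simpa using hmono i (by simpa using hi)
  have hbelow : span K (X '' (jumpSet F W n ∩ Iio j)) ≤ F (j - 1) := by
    refine span_le.2 ?_
    rintro _ ⟨i, ⟨hi, hij⟩, rfl⟩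
    have hij' : i ≤ j - 1 := by simp only [mem_Iio] at hij; omega
    exact hF (mem_Iic.2 hi.2.1) (mem_Iic.2 ((j.sub_le 1).trans hj.2.1)) hij' (hX i hi.1 hi.2.1).1
  have hXj : X j ∈ W ⊔ span K (X '' (jumpSet F W n ∩ Iio j)) := by
    rwa [← comap_map_mkQ, map_span, ← image_comp]
  exact notMem_sup_of_mem_jumpSet hdim hmono hX hj (sup_le_sup_left hbelow W hXj)

theorem span_mkQ_image_jumpSet_eq_top (htop : F n = ⊤) :
    span K (W.mkQ '' (X '' jumpSet F W n)) = ⊤ := by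
  rw [← map_span, map_mkQ_eq_top, eq_top_iff, ← htop]
  exact flag_le_of_forall_mem_jumpSet hdim hmono hX le_sup_left
    (fun j hj => mem_sup_right (subset_span (mem_image_of_mem X hj))) n le_rfl

end Flag

end

open Module in
theorem stmt_8_general {U : Type*} [AddCommGroup U] [Module ℝ U] [FiniteDimensional ℝ U]
    (n : ℕ)
    (F : ℕ → Submodule ℝ U)
    (hdim : ∀ j ≤ n, finrank ℝ (F j) = j)
    (hmono : ∀ j < n, F j ≤ F (j + 1))
    (htop : F n = ⊤)
    (W : Submodule ℝ U)
    (X : ℕ → U)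
    (hX : ∀ j, 1 ≤ j → j ≤ n → X j ∈ F j ∧ X j ∉ F (j - 1))
    (e : Set ℕ) (he : e = {j | 1 ≤ j ∧ j ≤ n ∧ ¬ F j ≤ W ⊔ F (j - 1)}) :
    LinearIndependent ℝ
      (fun j : e => (Submodule.Quotient.mk (X j) : U ⧸ W)) ∧
    Submodule.span ℝ
      (Set.range fun j : e => (Submodule.Quotient.mk (X j) : U ⧸ W)) = ⊤ := by
  obtain rfl : e = jumpSet F W n := he
  have hrange : range (fun j : jumpSet F W n => (Submodule.Quotient.mk (X j) : U ⧸ W)) =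
      W.mkQ '' (X '' jumpSet F W n) := by
    rw [image_image, image_eq_range]
    rfl
  rw [hrange]
  exact ⟨linearIndepOn_mkQ_jumpSet hdim hmono hX, span_mkQ_image_jumpSet_eq_top hdim hmono hX htop⟩

open Module in
/-- With a complete flag `(Fⱼ)`, a subspace `W` with jump set `e`,
and `Xⱼ ∈ Fⱼ \ Fⱼ₋₁`: the family `(Xⱼ + W)_{j ∈ e}` is a basis of `U/W`
(linearly independent and spanning). -/
theorem stmt_8 {U : Type*} [AddCommGroup U] [Module ℝ U] [FiniteDimensional ℝ U]
    (n : ℕ) (hn : finrank ℝ U = n)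
    (F : ℕ → Submodule ℝ U)
    (hdim : ∀ j ≤ n, finrank ℝ (F j) = j)
    (hmono : ∀ j < n, F j ≤ F (j + 1))
    (htop : F n = ⊤)
    (W : Submodule ℝ U)
    (X : ℕ → U)
    (hX : ∀ j, 1 ≤ j → j ≤ n → X j ∈ F j ∧ X j ∉ F (j - 1))
    (e : Set ℕ) (he : e = {j | 1 ≤ j ∧ j ≤ n ∧ ¬ F j ≤ W ⊔ F (j - 1)}) :
    LinearIndependent ℝ
      (fun j : e => (Submodule.Quotient.mk (X j) : U ⧸ W)) ∧
    Submodule.span ℝ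
      (Set.range fun j : e => (Submodule.Quotient.mk (X j) : U ⧸ W)) = ⊤ :=
  stmt_8_general n F hdim hmono htop W X hX e he
end

section
/- Let U be an m-dimensional real vector space with basis X₁,…,X_m adapted to the complete flag (Fⱼ = span{X₁,…,Xⱼ}), let e ⊆ {1,…,m}, and let W be a subspace with jump set e. Then there exists a unique family (Y₁,…,Y_m) in U^m such that: Yⱼ = Xⱼ for j ∈ e, and Y_i − X_i ∈ Uₑ ∩ F_{i−1} and Y_i ∈ W for i ∉ e, where Uₑ = span{Xⱼ : j ∈ e}. Moreover, (Y₁,…,Y_m) is a basis of U, Fⱼ = span{Y₁,…,Yⱼ} for all j, and {Y_i : i ∉ e} is a basis of W. -/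
open Module in
/-- Let `X₁,…,X_m` be a basis of `U` with flag
`Fⱼ = span{X₁,…,Xⱼ}`, let `e ⊆ {1,…,m}`, and `W` a subspace with jump set `e`.
Then there is a unique family `(Y₁,…,Y_m)` with `Yⱼ = Xⱼ` for `j ∈ e`, and
`Y_i − X_i ∈ Uₑ ∩ F_{i−1}` and `Y_i ∈ W` for `i ∉ e`; moreover `(Yⱼ)` is a
basis of `U`, `Fⱼ = span{Y₁,…,Yⱼ}`, and `{Y_i : i ∉ e}` is a basis of `W`. -/
theorem stmt_14 {U : Type*} [AddCommGroup U] [Module ℝ U] [FiniteDimensional ℝ U]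
    (m : ℕ) (hm : finrank ℝ U = m)
    (X : ℕ → U)
    (hXind : LinearIndependent ℝ (fun j : (Set.Icc 1 m : Set ℕ) => X j))
    (hXspan : Submodule.span ℝ (X '' Set.Icc 1 m) = ⊤)
    (F : ℕ → Submodule ℝ U) (hF : ∀ j, F j = Submodule.span ℝ (X '' Set.Icc 1 j))
    (e : Set ℕ) (he : e ⊆ Set.Icc 1 m)
    (W : Submodule ℝ U)
    (hjump : ∀ j, 1 ≤ j → j ≤ m → (¬ F j ≤ W ⊔ F (j - 1) ↔ j ∈ e))
    (Ue : Submodule ℝ U) (hUe : Ue = Submodule.span ℝ (X '' e)) :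
    ∃ Y : ℕ → U,
      (∀ j ∈ e, Y j = X j) ∧
      (∀ i, 1 ≤ i → i ≤ m → i ∉ e → Y i - X i ∈ Ue ⊓ F (i - 1) ∧ Y i ∈ W) ∧
      (∀ Y' : ℕ → U,
        (∀ j ∈ e, Y' j = X j) →
        (∀ i, 1 ≤ i → i ≤ m → i ∉ e → Y' i - X i ∈ Ue ⊓ F (i - 1) ∧ Y' i ∈ W) →
        ∀ j, 1 ≤ j → j ≤ m → Y' j = Y j) ∧
      LinearIndependent ℝ (fun j : (Set.Icc 1 m : Set ℕ) => Y j) ∧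
      Submodule.span ℝ (Y '' Set.Icc 1 m) = ⊤ ∧
      (∀ j, 1 ≤ j → j ≤ m → F j = Submodule.span ℝ (Y '' Set.Icc 1 j)) ∧
      W = Submodule.span ℝ (Y '' (Set.Icc 1 m \ e)) ∧
      LinearIndependent ℝ (fun i : (Set.Icc 1 m \ e : Set ℕ) => Y i) := by
  classical
  have hIcc0 : Set.Icc 1 0 = (∅ : Set ℕ) := Set.Icc_eq_empty (by omega)
  have hF0 : F 0 = ⊥ := by rw [hF, hIcc0]; simp
  have hIccstep : ∀ j : ℕ, Set.Icc 1 (j+1) = insert (j+1) (Set.Icc 1 j) := by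
    intro j; ext x; simp only [Set.mem_Icc, Set.mem_insert_iff]; omega
  have hFstep : ∀ j : ℕ, F (j+1) = Submodule.span ℝ {X (j+1)} ⊔ F j := by
    intro j
    rw [hF, hF, hIccstep, Set.image_insert_eq, Submodule.span_insert]
  have hFmono : ∀ j : ℕ, F j ≤ F (j+1) := by
    intro j; rw [hF, hF]
    exact Submodule.span_mono (Set.image_mono (Set.Icc_subset_Icc_right (by omega)))
  have hXmemF : ∀ j, 1 ≤ j → X j ∈ F j := by
    intro j hj; rw [hF]
    exact Submodule.subset_span ⟨j, ⟨hj, le_rfl⟩, rfl⟩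
  have hUeX : ∀ j ∈ e, X j ∈ Ue := by
    intro j hj; rw [hUe]; exact Submodule.subset_span ⟨j, hj, rfl⟩
  -- W ⊓ Ue = ⊥
  have hG : ∀ j : ℕ, W ⊓ Submodule.span ℝ (X '' (e ∩ Set.Icc 1 j)) = ⊥ := by
    intro j
    induction j with
    | zero =>
      rw [hIcc0]; simp
    | succ j ih =>
      by_cases hje : (j+1) ∈ e
      · have hins : e ∩ Set.Icc 1 (j+1) = insert (j+1) (e ∩ Set.Icc 1 j) := by
          ext x
          simp only [Set.mem_inter_iff, Set.mem_Icc, Set.mem_insert_iff]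
          constructor
          · rintro ⟨hx, h1, h2⟩
            rcases Nat.lt_or_ge x (j+1) with h | h
            · exact Or.inr ⟨hx, h1, by omega⟩
            · exact Or.inl (by omega)
          · rintro (rfl | ⟨hx, h1, h2⟩)
            · exact ⟨hje, by omega, le_rfl⟩
            · exact ⟨hx, h1, by omega⟩
        rw [hins, Set.image_insert_eq, eq_bot_iff]
        intro u hu
        obtain ⟨huW, huS⟩ := Submodule.mem_inf.mp hu
        rw [Submodule.mem_span_insert] at huS
        obtain ⟨c, z, hz, rfl⟩ := huS
        by_cases hc : c = 0
        · subst hc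
          simp only [zero_smul, zero_add] at huW ⊢
          exact (eq_bot_iff.mp ih) ⟨huW, hz⟩
        · exfalso
          have hzF : z ∈ F j := by
            rw [hF]
            exact Submodule.span_mono (Set.image_mono Set.inter_subset_right) hz
          have hXmem : X (j+1) ∈ W ⊔ F j := by
            have : X (j+1) = c⁻¹ • ((c • X (j+1) + z) - z) := by
              rw [add_sub_cancel_right, smul_smul, inv_mul_cancel₀ hc, one_smul]
            rw [this]
            exact Submodule.smul_mem _ _ (sub_mem (Submodule.mem_sup_left huW)
              (Submodule.mem_sup_right hzF))
          have hle : F (j+1) ≤ W ⊔ F j := by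
            rw [hFstep]
            exact sup_le ((Submodule.span_singleton_le_iff_mem _ _).mpr hXmem) le_sup_right
          have hjm : j + 1 ≤ m := (he hje).2
          have := (hjump (j+1) (by omega) hjm).mpr hje
          simp only [Nat.add_sub_cancel] at this
          exact this hle
      · have : e ∩ Set.Icc 1 (j+1) = e ∩ Set.Icc 1 j := by
          ext x
          simp only [Set.mem_inter_iff, Set.mem_Icc]
          constructor
          · rintro ⟨hx, h1, h2⟩
            have hne : x ≠ j + 1 := fun hxe => hje (hxe ▸ hx)
            exact ⟨hx, h1, by omega⟩
          · rintro ⟨hx, h1, h2⟩; exact ⟨hx, h1, by omega⟩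
        rw [this]; exact ih
  have hWUe : W ⊓ Ue = ⊥ := by
    have := hG m
    rw [Set.inter_eq_self_of_subset_left he] at this
    rw [hUe]; exact this
  -- not-jump gives containment
  have hnotjump : ∀ i, 1 ≤ i → i ≤ m → i ∉ e → F i ≤ W ⊔ F (i-1) := by
    intro i h1 h2 h3
    by_contra h
    exact h3 ((hjump i h1 h2).mp h)
  -- F j ≤ W ⊔ (Ue ⊓ F j)
  have hB : ∀ j, j ≤ m → F j ≤ W ⊔ (Ue ⊓ F j) := by
    intro j
    induction j with
    | zero => intro _; rw [hF0]; exact bot_le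
    | succ j ih =>
      intro hjm
      have hIH : F j ≤ W ⊔ (Ue ⊓ F (j+1)) :=
        (ih (by omega)).trans (sup_le_sup_left (inf_le_inf_left _ (hFmono j)) _)
      refine le_trans (hFstep j).le (sup_le ?_ ?_)
      · rw [Submodule.span_singleton_le_iff_mem]
        by_cases hje : (j+1) ∈ e
        · exact Submodule.mem_sup_right
            (Submodule.mem_inf.mpr ⟨hUeX _ hje, hXmemF _ (by omega)⟩)
        · have h1 : F (j+1) ≤ W ⊔ F j := by
            have := hnotjump (j+1) (by omega) hjm hje
            simpa using this
          have h2 : X (j+1) ∈ W ⊔ F j := h1 (hXmemF _ (by omega))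
          exact (sup_le le_sup_left hIH) h2
      · exact hIH
  -- existence of Y i
  have hex : ∀ i, 1 ≤ i → i ≤ m → i ∉ e →
      ∃ y, y - X i ∈ Ue ⊓ F (i-1) ∧ y ∈ W := by
    intro i h1 h2 h3
    have hX1 : X i ∈ W ⊔ F (i-1) := hnotjump i h1 h2 h3 (hXmemF i h1)
    have hX2 : X i ∈ W ⊔ (Ue ⊓ F (i-1)) :=
      (sup_le le_sup_left (hB (i-1) (by omega))) hX1
    rw [Submodule.mem_sup] at hX2
    obtain ⟨w, hw, z, hz, hwz⟩ := hX2
    refine ⟨w, ?_, hw⟩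
    have : w - X i = -z := by rw [← hwz]; abel
    rw [this]
    exact neg_mem hz
  set Y : ℕ → U := fun i =>
    if h : 1 ≤ i ∧ i ≤ m ∧ i ∉ e then Classical.choose (hex i h.1 h.2.1 h.2.2) else X i
    with hYdef
  have hY1 : ∀ j ∈ e, Y j = X j := by
    intro j hj
    rw [hYdef]
    exact dif_neg (by tauto)
  have hY2 : ∀ i, 1 ≤ i → i ≤ m → i ∉ e → Y i - X i ∈ Ue ⊓ F (i - 1) ∧ Y i ∈ W := by
    intro i h1 h2 h3
    have h : 1 ≤ i ∧ i ≤ m ∧ i ∉ e := ⟨h1, h2, h3⟩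
    have : Y i = Classical.choose (hex i h.1 h.2.1 h.2.2) := dif_pos h
    rw [this]
    exact Classical.choose_spec (hex i h.1 h.2.1 h.2.2)
  -- uniqueness
  have huniq : ∀ Y' : ℕ → U,
      (∀ j ∈ e, Y' j = X j) →
      (∀ i, 1 ≤ i → i ≤ m → i ∉ e → Y' i - X i ∈ Ue ⊓ F (i - 1) ∧ Y' i ∈ W) →
      ∀ j, 1 ≤ j → j ≤ m → Y' j = Y j := by
    intro Y' hY'1 hY'2 j h1 h2
    by_cases hje : j ∈ e
    · rw [hY'1 j hje, hY1 j hje]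
    · have hW : Y' j - Y j ∈ W := sub_mem (hY'2 j h1 h2 hje).2 (hY2 j h1 h2 hje).2
      have hU : Y' j - Y j ∈ Ue := by
        have : Y' j - Y j = (Y' j - X j) - (Y j - X j) := by abel
        rw [this]
        exact sub_mem (hY'2 j h1 h2 hje).1.1 (hY2 j h1 h2 hje).1.1
      have : Y' j - Y j = 0 := by
        have := (eq_bot_iff.mp hWUe) ⟨hW, hU⟩
        simpa using this
      exact sub_eq_zero.mp this
  -- difference lies in the previous flag piece
  have hdiff : ∀ j, 1 ≤ j → j ≤ m → Y j - X j ∈ F (j-1) := by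
    intro j h1 h2
    by_cases hje : j ∈ e
    · rw [hY1 j hje, sub_self]; exact zero_mem _
    · exact (hY2 j h1 h2 hje).1.2
  -- flag
  have hFlag : ∀ j, j ≤ m → F j = Submodule.span ℝ (Y '' Set.Icc 1 j) := by
    intro j
    induction j with
    | zero => intro _; rw [hIcc0, hF0]; simp
    | succ j ih =>
      intro hjm
      have hd : Y (j+1) - X (j+1) ∈ F j := by
        have := hdiff (j+1) (by omega) hjm
        simpa using this
      rw [hIccstep, Set.image_insert_eq, Submodule.span_insert, ← ih (by omega), hFstep]
      apply le_antisymm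
      · refine sup_le ?_ le_sup_right
        rw [Submodule.span_singleton_le_iff_mem]
        have : X (j+1) = Y (j+1) - (Y (j+1) - X (j+1)) := by abel
        rw [this]
        exact sub_mem (Submodule.mem_sup_left (Submodule.subset_span rfl))
          (Submodule.mem_sup_right hd)
      · refine sup_le ?_ le_sup_right
        rw [Submodule.span_singleton_le_iff_mem]
        have : Y (j+1) = X (j+1) + (Y (j+1) - X (j+1)) := by abel
        rw [this]
        exact add_mem (Submodule.mem_sup_left (Submodule.subset_span rfl))
          (Submodule.mem_sup_right hd)
  -- top span
  have htop : Submodule.span ℝ (Y '' Set.Icc 1 m) = ⊤ := by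
    rw [← hFlag m le_rfl, hF]; exact hXspan
  -- cardinality
  have hcard : Fintype.card (Set.Icc 1 m : Set ℕ) = m := by
    rw [Fintype.card_eq_nat_card, Nat.card_coe_set_eq]
    simp [Set.ncard_eq_toFinset_card']
  have hYind : LinearIndependent ℝ (fun j : (Set.Icc 1 m : Set ℕ) => Y j) := by
    apply linearIndependent_of_top_le_span_of_card_eq_finrank
    · rw [← Set.image_eq_range, htop]
    · rw [hcard, hm]
  -- span of W
  have hd_le : Submodule.span ℝ (Y '' (Set.Icc 1 m \ e)) ≤ W := by
    rw [Submodule.span_le]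
    rintro _ ⟨i, ⟨hi, hie⟩, rfl⟩
    exact (hY2 i hi.1 hi.2 hie).2
  have hsup : Submodule.span ℝ (Y '' (Set.Icc 1 m \ e)) ⊔ Ue = ⊤ := by
    apply top_unique
    rw [← htop, Submodule.span_le]
    rintro _ ⟨j, hj, rfl⟩
    by_cases hje : j ∈ e
    · rw [hY1 j hje]
      exact Submodule.mem_sup_right (hUeX j hje)
    · exact Submodule.mem_sup_left (Submodule.subset_span ⟨j, ⟨hj, hje⟩, rfl⟩)
  have hWspan : W = Submodule.span ℝ (Y '' (Set.Icc 1 m \ e)) := by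
    calc W = (Submodule.span ℝ (Y '' (Set.Icc 1 m \ e)) ⊔ Ue) ⊓ W := by
            rw [hsup, top_inf_eq]
      _ = Submodule.span ℝ (Y '' (Set.Icc 1 m \ e)) ⊔ (Ue ⊓ W) :=
            sup_inf_assoc_of_le _ hd_le
      _ = Submodule.span ℝ (Y '' (Set.Icc 1 m \ e)) := by
            rw [inf_comm Ue W, hWUe, sup_bot_eq]
  have hsubdiff : (Set.Icc 1 m \ e) ⊆ Set.Icc 1 m := Set.diff_subset
  refine ⟨Y, hY1, hY2, huniq, hYind, htop, fun j _ h2 => hFlag j h2, hWspan, ?_⟩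
  exact hYind.comp (Set.inclusion hsubdiff) (Set.inclusion_injective hsubdiff)
end

section
/- Let g be a finite-dimensional real nilpotent Lie algebra with Jordan–Hölder basis (X₁,…,X_m) compatible with the flag Fⱼ = span{X₁,…,Xⱼ}, and fix a partition {1,…,m} = A₁ ⊔ ⋯ ⊔ A_k. Define Φ(t₁,…,t_m) := (Σ_{j∈A₁} tⱼXⱼ) · ⋯ · (Σ_{j∈A_k} tⱼXⱼ), where · is the Baker–Campbell–Hausdorff multiplication on g. Then there exist polynomial functions Pⱼ : ℝ^{m−j} → ℝ such that Φ(t₁,…,t_m) = Σⱼ₌₁^m (tⱼ + Pⱼ(t_{j+1},…,t_m)) Xⱼ for all t ∈ ℝ^m. In particular, Φ : ℝ^m → g is a bijection with polynomial inverse. -/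
/-!
For `u, v ∈ F (i + 1)` one has `(X + u)·(Y + v) ≡ X·Y + u + v mod F i`. By induction on `i`,
the product respects cosets of `F i`, so it descends to a polynomial group law on
`g ⧸ F i ≃ ℝ^{m-i}`, in which the image `e` of the basis vector `b i` has vanishing bracket with
everything, by the Jordan–Hölder condition. In such a group law, whose one-parameter subgroups are the lines
`t ↦ t • x`, the element `e` is central and `x·(s e) = x + s e`: a polynomial homomorphism
`ℝ → G` is linear, so conjugation maps the line through `e` to a line, and the second-order
expansion of the product shows that `t ↦ (t x)·e·(-t x)` has zero derivative.

Applied block by block, the congruence shows that the `j`-th coordinate of `Φ t` is `tⱼ` plus the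
`j`-th coordinate of `Φ` at `t` with the entries `tᵢ`, `i ≤ j`, set to zero; the latter is a
polynomial in the `tᵢ` with `i > j` because the product is polynomial. Such a triangular map is inverted
polynomially by back-substitution.
-/

/-- `mul` is the Baker–Campbell–Hausdorff multiplication of the (nilpotent) Lie
algebra `g`: it is a group law, polynomial in the coordinates with respect to a
basis, satisfies `(t•X)·(s•X) = (t+s)•X`, and its second-order term recovers
the Lie bracket (`mul (t•X) (t•Y) = t•X + t•Y + (t²/2)•⁅X,Y⁆ + O(t³)`). -/
def IsBCHMul (g : Type*) [LieRing g] [LieAlgebra ℝ g] (mul : g → g → g) : Prop :=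
  (∀ X Y Z : g, mul (mul X Y) Z = mul X (mul Y Z)) ∧
  (∀ X : g, mul 0 X = X) ∧
  (∀ X : g, mul X 0 = X) ∧
  (∀ X : g, mul X (-X) = 0) ∧
  (∀ (t s : ℝ) (X : g), mul (t • X) (s • X) = (t + s) • X) ∧
  (∃ (d : ℕ) (b : Module.Basis (Fin d) ℝ g) (Q : Fin d → MvPolynomial (Fin d ⊕ Fin d) ℝ),
    ∀ (X Y : g) (i : Fin d),
      b.repr (mul X Y) i =
        MvPolynomial.eval (Sum.elim (fun j => b.repr X j) (fun j => b.repr Y j)) (Q i)) ∧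
  (∀ X Y : g, ∃ (N : ℕ) (c : ℕ → g), ∀ t : ℝ,
    mul (t • X) (t • Y) =
      t • X + t • Y + (t ^ 2 / 2) • ⁅X, Y⁆ + ∑ i ∈ Finset.range N, t ^ (i + 3) • c i)

open Polynomial

theorem MvPolynomial.eval_congr_vars {R σ : Type*} [CommSemiring R] {p : MvPolynomial σ R}
    {f g : σ → R} (h : ∀ i ∈ p.vars, f i = g i) :
    MvPolynomial.eval f p = MvPolynomial.eval g p :=
  MvPolynomial.eval₂Hom_congr' rfl (fun i hi _ => h i hi) rfl

theorem MvPolynomial.eval_bind₁ {R σ τ : Type*} [CommSemiring R] (x : τ → R)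
    (f : σ → MvPolynomial τ R) (φ : MvPolynomial σ R) :
    MvPolynomial.eval x (MvPolynomial.bind₁ f φ) =
      MvPolynomial.eval (fun i => MvPolynomial.eval x (f i)) φ :=
  MvPolynomial.eval₂Hom_bind₁ _ _ _ _

theorem MvPolynomial.aeval_sub_aeval_mem {R σ S : Type*} [CommSemiring R] [CommRing S]
    [Algebra R S] (I : Ideal S) {f f' : σ → S} (h : ∀ i, f' i - f i ∈ I) (φ : MvPolynomial σ R) :
    MvPolynomial.aeval f' φ - MvPolynomial.aeval f φ ∈ I := by
  rw [← Ideal.Quotient.eq, ← Ideal.Quotient.mkₐ_eq_mk R, ← AlgHom.comp_apply,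
    MvPolynomial.comp_aeval, ← AlgHom.comp_apply, MvPolynomial.comp_aeval]
  congr 2
  funext i
  exact Ideal.Quotient.eq.mpr (h i)

theorem Polynomial.eval_mvPolynomial_aeval {R σ : Type*} [CommSemiring R] (p : σ → R[X])
    (φ : MvPolynomial σ R) (t : R) :
    (MvPolynomial.aeval p φ).eval t = MvPolynomial.eval (fun a => (p a).eval t) φ := by
  rw [← coe_aeval_eq_eval, ← AlgHom.comp_apply, MvPolynomial.comp_aeval]
  rfl

def IsPolyMap {κ ι : Type*} (Φ : (κ → ℝ) → ι → ℝ) : Prop :=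
  ∃ Q : ι → MvPolynomial κ ℝ, ∀ x l, Φ x l = MvPolynomial.eval x (Q l)

namespace IsPolyMap

variable {κ ι μ : Type*}

theorem comp {Φ : (κ → ℝ) → ι → ℝ} {Ψ : (μ → ℝ) → κ → ℝ} (hΦ : IsPolyMap Φ)
    (hΨ : IsPolyMap Ψ) : IsPolyMap (Φ ∘ Ψ) := by
  obtain ⟨Q, hQ⟩ := hΦ
  obtain ⟨R, hR⟩ := hΨ
  refine ⟨fun l => MvPolynomial.bind₁ R (Q l), fun x l => ?_⟩
  rw [Function.comp_apply, hQ, MvPolynomial.eval_bind₁]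
  exact congrArg (MvPolynomial.eval · (Q l)) (funext (hR x))

theorem sumElim {Φ : (κ → ℝ) → ι → ℝ} {Ψ : (κ → ℝ) → μ → ℝ} (hΦ : IsPolyMap Φ)
    (hΨ : IsPolyMap Ψ) : IsPolyMap fun x => Sum.elim (Φ x) (Ψ x) := by
  obtain ⟨Q, hQ⟩ := hΦ
  obtain ⟨R, hR⟩ := hΨ
  exact ⟨Sum.elim Q R, by rintro x (l | l) <;> simp [hQ, hR]⟩

end IsPolyMap

theorem LinearMap.isPolyMap {κ ι : Type*} [Fintype κ] (L : (κ → ℝ) →ₗ[ℝ] ι → ℝ) :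
    IsPolyMap L := by
  classical
  refine ⟨fun l => ∑ j, MvPolynomial.C (L (fun i => if j = i then 1 else 0) l) *
    MvPolynomial.X j, fun x l => ?_⟩
  conv_lhs => rw [L.pi_apply_eq_sum_univ x]
  simp [mul_comm]

-- Polynomial curves that are `O(t ^ k)` at `t = 0`.
def polyCurves (ι : Type*) (k : ℕ) : Submodule ℝ (ℝ → ι → ℝ) where
  carrier := {f | ∃ p : ι → ℝ[X], (∀ l, X ^ k ∣ p l) ∧ ∀ t l, f t l = (p l).eval t}
  add_mem' := by
    rintro f g ⟨p, hp, hf⟩ ⟨q, hq, hg⟩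
    exact ⟨p + q, fun l => dvd_add (hp l) (hq l), by simp [hf, hg]⟩
  zero_mem' := ⟨0, by simp, by simp⟩
  smul_mem' := by
    rintro c f ⟨p, hp, hf⟩
    exact ⟨c • p, fun l => by simpa [smul_eq_C_mul] using dvd_mul_of_dvd_right (hp l) _,
      by simp [hf]⟩

namespace polyCurves

variable {ι κ : Type*}

theorem antitone : Antitone (polyCurves ι) := by
  rintro k k' hk f ⟨p, hp, hf⟩
  exact ⟨p, fun l => (pow_dvd_pow X hk).trans (hp l), hf⟩

theorem const_mem (v : ι → ℝ) : (fun _ => v) ∈ polyCurves ι 0 :=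
  ⟨fun l => C (v l), by simp, by simp⟩

theorem pow_smul_mem (k : ℕ) (v : ι → ℝ) : (fun t => t ^ k • v) ∈ polyCurves ι k :=
  ⟨fun l => C (v l) * X ^ k, fun l => dvd_mul_left _ _, fun t l => by simp; ring⟩

theorem smul_mem (v : ι → ℝ) : (fun t => t • v) ∈ polyCurves ι 0 :=
  antitone (Nat.zero_le 1) (by simpa using pow_smul_mem 1 v)

theorem sum_pow_smul_mem (k N : ℕ) (c : ℕ → ι → ℝ) :
    (fun t : ℝ => ∑ i ∈ Finset.range N, t ^ (i + k) • c i) ∈ polyCurves ι k := by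
  have h : (fun t : ℝ => ∑ i ∈ Finset.range N, t ^ (i + k) • c i) =
      ∑ i ∈ Finset.range N, fun t : ℝ => t ^ (i + k) • c i := by
    ext t; simp [Finset.sum_apply]
  rw [h]
  exact Submodule.sum_mem _ fun i _ =>
    antitone (Nat.le_add_left k i) (pow_smul_mem _ _)

theorem sumElim_mem {k : ℕ} {f : ℝ → κ → ℝ} {g : ℝ → ι → ℝ} (hf : f ∈ polyCurves κ k)
    (hg : g ∈ polyCurves ι k) : (fun t => Sum.elim (f t) (g t)) ∈ polyCurves (κ ⊕ ι) k := by
  obtain ⟨p, hp, hfp⟩ := hf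
  obtain ⟨q, hq, hgq⟩ := hg
  exact ⟨Sum.elim p q, by rintro (l | l); exacts [hp l, hq l],
    by rintro t (l | l); exacts [hfp t l, hgq t l]⟩

theorem eq_zero_of_forall_natCast {f : ℝ → ι → ℝ} (hf : f ∈ polyCurves ι 0)
    (h : ∀ N : ℕ, f N = 0) : f = 0 := by
  obtain ⟨p, -, hfp⟩ := hf
  have hp : ∀ l, p l = 0 := fun l => by
    refine Polynomial.eq_of_infinite_eval_eq _ _ <|
      (Set.infinite_range_of_injective Nat.cast_injective).mono ?_
    rintro _ ⟨N, rfl⟩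
    simpa [← hfp] using congrFun (h N) l
  ext t l
  simp [hfp, hp]

theorem mem_of_smul_mem {k : ℕ} {f : ℝ → ι → ℝ} (hf : f ∈ polyCurves ι 0)
    (h : (fun t => t • f t) ∈ polyCurves ι (k + 1)) : f ∈ polyCurves ι k := by
  obtain ⟨p, -, hfp⟩ := hf
  obtain ⟨q, hq, hfq⟩ := h
  refine ⟨p, fun l => ?_, hfp⟩
  have hXp : X * p l = q l := Polynomial.funext fun t => by simpa [hfp] using hfq t l
  rw [← mul_dvd_mul_iff_left (X_ne_zero (R := ℝ)), ← pow_succ', hXp]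
  exact hq l

theorem eq_zero_of_smul_mem {v : ι → ℝ} (h : (fun t => t • v) ∈ polyCurves ι 2) : v = 0 := by
  have h₁ := mem_of_smul_mem (const_mem v) h
  obtain ⟨p, hp, hfp⟩ := h₁
  funext l
  have hpl : p l = C (v l) := Polynomial.funext fun t => by simp [← hfp]
  have := hp l
  rw [hpl, pow_one, X_dvd_iff, coeff_C_zero] at this
  exact this

theorem eq_of_forall_sub_mem {f : ℝ → ι → ℝ} (hf : f ∈ polyCurves ι 0)
    (h : ∀ t, (fun s => f (t + s) - f t) ∈ polyCurves ι 2) (t : ℝ) : f t = f 0 := by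
  obtain ⟨p, -, hfp⟩ := hf
  have hderiv : ∀ l t, (derivative (p l)).eval t = 0 := fun l t => by
    obtain ⟨q, hq, hfq⟩ := h t
    have htaylor : taylor t (p l) - C ((p l).eval t) = q l :=
      Polynomial.funext fun s => by simp [← hfq, hfp, taylor_eval, add_comm s t]
    have hcoeff := (X_pow_dvd_iff.mp (hq l)) 1 (by norm_num)
    rw [← htaylor, coeff_sub, coeff_C, if_neg one_ne_zero, sub_zero, taylor_coeff_one] at hcoeff
    exact hcoeff
  funext l
  have hconst : p l = C ((p l).coeff 0) :=
    eq_C_of_derivative_eq_zero (Polynomial.funext fun t => by simpa using hderiv l t)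
  rw [hfp, hfp, hconst]
  simp

end polyCurves

theorem IsPolyMap.comp_mem_polyCurves {κ ι : Type*} {Φ : (κ → ℝ) → ι → ℝ} (hΦ : IsPolyMap Φ)
    {f : ℝ → κ → ℝ} (hf : f ∈ polyCurves κ 0) : (fun t => Φ (f t)) ∈ polyCurves ι 0 := by
  obtain ⟨Q, hQ⟩ := hΦ
  obtain ⟨p, -, hfp⟩ := hf
  refine ⟨fun l => MvPolynomial.aeval p (Q l), by simp, fun t l => ?_⟩
  dsimp only
  rw [hQ, eval_mvPolynomial_aeval]
  exact congrArg (MvPolynomial.eval · (Q l)) (funext (hfp t))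

theorem IsPolyMap.comp_sub_comp_mem_polyCurves {κ ι : Type*} {Φ : (κ → ℝ) → ι → ℝ}
    (hΦ : IsPolyMap Φ) {k : ℕ} {f f' : ℝ → κ → ℝ} (hf : f ∈ polyCurves κ 0)
    (hf' : f' - f ∈ polyCurves κ k) :
    (fun t => Φ (f' t)) - (fun t => Φ (f t)) ∈ polyCurves ι k := by
  obtain ⟨Q, hQ⟩ := hΦ
  obtain ⟨p, -, hfp⟩ := hf
  obtain ⟨r, hr, hfr⟩ := hf'
  refine ⟨fun l => MvPolynomial.aeval (p + r) (Q l) - MvPolynomial.aeval p (Q l),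
    fun l => Ideal.mem_span_singleton.mp <| MvPolynomial.aeval_sub_aeval_mem _
      (fun a => by simpa [Ideal.mem_span_singleton] using hr a) _, fun t l => ?_⟩
  have hf't : f' t = fun a => (p a + r a).eval t := funext fun a => by
    simpa [hfp, sub_eq_iff_eq_add'] using hfr t a
  simp only [Pi.sub_apply, hQ, eval_sub, eval_mvPolynomial_aeval, hf't]
  rw [show f t = fun a => (p a).eval t from funext (hfp t)]
  rfl

structure PolyGroupLaw (ι : Type*) where
  mul : (ι → ℝ) → (ι → ℝ) → ι → ℝ
  mul_assoc : ∀ x y z, mul (mul x y) z = mul x (mul y z)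
  zero_mul : ∀ x, mul 0 x = x
  mul_zero : ∀ x, mul x 0 = x
  mul_neg_cancel : ∀ x, mul x (-x) = 0
  smul_mul_smul : ∀ (t s : ℝ) (x : ι → ℝ), mul (t • x) (s • x) = (t + s) • x
  isPolyMap : IsPolyMap fun z : ι ⊕ ι → ℝ => mul (z ∘ Sum.inl) (z ∘ Sum.inr)

namespace PolyGroupLaw

variable {ι : Type*} (G : PolyGroupLaw ι)

theorem neg_mul_cancel (x : ι → ℝ) : G.mul (-x) x = 0 := by
  simpa using G.mul_neg_cancel (-x)

theorem neg_mul_cancel_left (x y : ι → ℝ) : G.mul (-x) (G.mul x y) = y := by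
  rw [← G.mul_assoc, G.neg_mul_cancel, G.zero_mul]

theorem mul_neg_cancel_left (x y : ι → ℝ) : G.mul x (G.mul (-x) y) = y := by
  rw [← G.mul_assoc, G.mul_neg_cancel, G.zero_mul]

theorem neg_mul_cancel_right (x y : ι → ℝ) : G.mul (G.mul x (-y)) y = x := by
  rw [G.mul_assoc, G.neg_mul_cancel, G.mul_zero]

theorem mul_left_cancel {x y z : ι → ℝ} (h : G.mul z x = G.mul z y) : x = y := by
  rw [← G.neg_mul_cancel_left z x, h, G.neg_mul_cancel_left]

theorem neg_mul_rev (x y : ι → ℝ) : -G.mul x y = G.mul (-y) (-x) :=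
  G.mul_left_cancel <| by
    rw [G.mul_neg_cancel, G.mul_assoc, G.mul_neg_cancel_left, G.mul_neg_cancel]

def conj (z w : ι → ℝ) : ι → ℝ := G.mul (G.mul z w) (-z)

theorem conj_zero_left (w : ι → ℝ) : G.conj 0 w = w := by
  simp [conj, G.zero_mul, G.mul_zero]

theorem conj_mul (z x y : ι → ℝ) : G.conj z (G.mul x y) = G.mul (G.conj z x) (G.conj z y) := by
  simp only [conj, G.mul_assoc, G.neg_mul_cancel_left]

theorem conj_conj (z z' w : ι → ℝ) : G.conj z (G.conj z' w) = G.conj (G.mul z z') w := by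
  simp only [conj, G.neg_mul_rev, G.mul_assoc]

theorem mul_mem_polyCurves {f g : ℝ → ι → ℝ} (hf : f ∈ polyCurves ι 0)
    (hg : g ∈ polyCurves ι 0) : (fun t => G.mul (f t) (g t)) ∈ polyCurves ι 0 := by
  simpa using G.isPolyMap.comp_mem_polyCurves (polyCurves.sumElim_mem hf hg)

theorem mul_sub_mul_mem_polyCurves {k : ℕ} {f g f' g' : ℝ → ι → ℝ} (hf : f ∈ polyCurves ι 0)
    (hg : g ∈ polyCurves ι 0) (hf' : f' - f ∈ polyCurves ι k) (hg' : g' - g ∈ polyCurves ι k) :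
    (fun t => G.mul (f' t) (g' t)) - (fun t => G.mul (f t) (g t)) ∈ polyCurves ι k := by
  have h := polyCurves.sumElim_mem hf' hg'
  rw [show (fun t => Sum.elim ((f' - f) t) ((g' - g) t)) =
      (fun t => Sum.elim (f' t) (g' t)) - (fun t => Sum.elim (f t) (g t)) by
    ext t (l | l) <;> rfl] at h
  simpa using G.isPolyMap.comp_sub_comp_mem_polyCurves (polyCurves.sumElim_mem hf hg) h

theorem eq_smul_of_mul_hom {γ : ℝ → ι → ℝ} (hγ : γ ∈ polyCurves ι 0)
    (hhom : ∀ a b, γ (a + b) = G.mul (γ a) (γ b)) (t : ℝ) : γ t = t • γ 1 := by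
  have h0 : γ 0 = 0 := G.mul_left_cancel (z := γ 0) (by rw [← hhom, add_zero, G.mul_zero])
  have hnat : ∀ N : ℕ, γ N = (N : ℝ) • γ 1 := by
    intro N
    induction N with
    | zero => simpa using h0
    | succ N ih => rw [Nat.cast_succ, hhom, ih]; simpa using G.smul_mul_smul N 1 (γ 1)
  have := polyCurves.eq_zero_of_forall_natCast (sub_mem hγ (polyCurves.smul_mem (γ 1)))
    fun N => by simp [hnat]
  exact sub_eq_zero.mp (congrFun this t)

theorem conj_smul (z e : ι → ℝ) (s : ℝ) : G.conj z (s • e) = s • G.conj z e := by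
  have hpoly : (fun t : ℝ => G.conj z (t • e)) ∈ polyCurves ι 0 :=
    G.mul_mem_polyCurves (G.mul_mem_polyCurves (polyCurves.const_mem z) (polyCurves.smul_mem e))
      (polyCurves.const_mem _)
  simpa using G.eq_smul_of_mul_hom hpoly (fun a b => by rw [← G.conj_mul, G.smul_mul_smul]) s

variable {e : ι → ℝ}

theorem conj_eq_self
    (hcentral : ∀ x, (fun t : ℝ => G.mul (t • x) (t • e) - t • (x + e)) ∈ polyCurves ι 3)
    (hcentral' : ∀ x, (fun t : ℝ => G.mul (t • (x + e)) (t • -x) - t • e) ∈ polyCurves ι 3)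
    (x : ι → ℝ) : G.conj x e = e := by
  set β : ℝ → ι → ℝ := fun t => G.conj (t • x) e with hβ
  have hβpoly : β ∈ polyCurves ι 0 :=
    G.mul_mem_polyCurves (G.mul_mem_polyCurves (polyCurves.smul_mem x) (polyCurves.const_mem e))
      (neg_mem (polyCurves.smul_mem x))
  -- `t • (β t - e)` is `(t x)(t e)(-t x) - t e`, which vanishes to third order.
  have hβe : β - (fun _ => e) ∈ polyCurves ι 2 := by
    refine polyCurves.mem_of_smul_mem (sub_mem hβpoly (polyCurves.const_mem e)) ?_
    have h₁ := G.mul_sub_mul_mem_polyCurves (polyCurves.smul_mem (x + e))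
      (polyCurves.smul_mem (-x)) (hcentral x) (g' := fun t => t • -x) (by simp)
    convert add_mem h₁ (hcentral' x) using 1
    funext t
    simp only [Pi.sub_apply, Pi.add_apply, smul_sub, hβ]
    rw [← G.conj_smul]
    simp only [conj, smul_neg]
    abel
  have hstep : ∀ t, (fun s => β (t + s) - β t) ∈ polyCurves ι 2 := by
    intro t
    have hflow : ∀ s, β (t + s) = G.conj (t • x) (β s) := fun s => by
      simp only [hβ, G.conj_conj, G.smul_mul_smul]
    have h₁ := G.mul_sub_mul_mem_polyCurves (polyCurves.const_mem (t • x))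
      (polyCurves.const_mem e) (f' := fun _ => t • x) (by simp) hβe
    have h₂ := G.mul_sub_mul_mem_polyCurves
      (G.mul_mem_polyCurves (polyCurves.const_mem (t • x)) (polyCurves.const_mem e))
      (polyCurves.const_mem (-(t • x))) h₁ (g' := fun _ => -(t • x)) (by simp)
    convert h₂ using 1
    funext s
    rw [hflow]
    rfl
  simpa [hβ, G.conj_zero_left] using polyCurves.eq_of_forall_sub_mem hβpoly hstep 1

theorem mul_smul_comm (hconj : ∀ x, G.conj x e = e) (x : ι → ℝ) (s : ℝ) :
    G.mul x (s • e) = G.mul (s • e) x := by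
  rw [← G.neg_mul_cancel_right (G.mul x (s • e)) x, ← conj, G.conj_smul, hconj]

theorem mul_smul_eq_add (hconj : ∀ x, G.conj x e = e)
    (hlin : ∀ x y, (fun t : ℝ => G.mul (t • x) (t • y) - t • (x + y)) ∈ polyCurves ι 2)
    (x : ι → ℝ) (s : ℝ) : G.mul x (s • e) = x + s • e := by
  set γ : ℝ → ι → ℝ := fun r => G.mul (r • x) (r • s • e) with hγ
  have hhom : ∀ a b, γ (a + b) = G.mul (γ a) (γ b) := fun a b => by
    have hcomm : G.mul (b • x) (a • s • e) = G.mul (a • s • e) (b • x) := by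
      rw [smul_smul, G.mul_smul_comm hconj]
    simp only [hγ, ← G.smul_mul_smul a b, G.mul_assoc]
    rw [← G.mul_assoc (b • x), hcomm, G.mul_assoc]
  have hγpoly : γ ∈ polyCurves ι 0 :=
    G.mul_mem_polyCurves (polyCurves.smul_mem x) (polyCurves.smul_mem (s • e))
  have hγ1 : γ 1 = G.mul x (s • e) := by simp [hγ]
  -- `γ` is the one-parameter group `t ↦ t • γ 1`, whose first-order term is `t • (x + s • e)`.
  have hfirst : (fun t : ℝ => t • (γ 1 - (x + s • e))) ∈ polyCurves ι 2 := by
    convert hlin x (s • e) using 2 with t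
    rw [smul_sub, ← G.eq_smul_of_mul_hom hγpoly hhom]
  rw [← hγ1, ← sub_eq_zero]
  exact polyCurves.eq_zero_of_smul_mem hfirst

theorem mul_add_smul_add_smul (hconj : ∀ x, G.conj x e = e)
    (hlin : ∀ x y, (fun t : ℝ => G.mul (t • x) (t • y) - t • (x + y)) ∈ polyCurves ι 2)
    (x y : ι → ℝ) (a c : ℝ) : G.mul (x + a • e) (y + c • e) = G.mul x y + a • e + c • e := by
  have hadd := G.mul_smul_eq_add hconj hlin
  rw [← hadd x, ← hadd y, G.mul_assoc, ← G.mul_smul_comm hconj, ← G.mul_assoc,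
    ← G.mul_assoc, hadd, hadd, add_right_comm]

end PolyGroupLaw

section Descent

variable {g : Type*} [LieRing g] [LieAlgebra ℝ g]

theorem Module.Basis.isPolyMap_equivFun_comp {κ κ' μ : Type*} [Fintype κ] [Fintype κ']
    (b : Module.Basis κ ℝ g) (b' : Module.Basis κ' ℝ g) {f : (μ → ℝ) → g}
    (h : IsPolyMap (b.equivFun ∘ f)) : IsPolyMap (b'.equivFun ∘ f) := by
  convert (b'.equivFun.toLinearMap ∘ₗ b.equivFun.symm.toLinearMap).isPolyMap.comp h using 1
  funext x
  simp

theorem IsBCHMul.isPolyMap_mul {mul : g → g → g} (hmul : IsBCHMul g mul) {κ μ : Type*}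
    [Fintype κ] (b : Module.Basis κ ℝ g) {f₁ f₂ : (μ → ℝ) → g}
    (h₁ : IsPolyMap (b.equivFun ∘ f₁)) (h₂ : IsPolyMap (b.equivFun ∘ f₂)) :
    IsPolyMap (b.equivFun ∘ fun x => mul (f₁ x) (f₂ x)) := by
  obtain ⟨d, b', Q, hQ⟩ := hmul.2.2.2.2.2.1
  have hQ' : IsPolyMap fun z : Fin d ⊕ Fin d → ℝ =>
      b'.equivFun (mul (b'.equivFun.symm (z ∘ Sum.inl)) (b'.equivFun.symm (z ∘ Sum.inr))) :=
    ⟨Q, fun z l => by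
      show b'.equivFun _ l = _
      rw [Module.Basis.equivFun_apply, hQ]
      congr 1
      ext (a | a) <;> simp [Finsupp.single_apply]⟩
  refine b'.isPolyMap_equivFun_comp b ?_
  convert hQ'.comp ((b.isPolyMap_equivFun_comp b' h₁).sumElim
    (b.isPolyMap_equivFun_comp b' h₂)) using 1
  funext x
  simp

variable {ι : Type*} (mul : g → g → g) (π : g →ₗ[ℝ] ι → ℝ) (σ : (ι → ℝ) →ₗ[ℝ] g)

-- The group law induced on the quotient `g ⧸ ker π ≃ ι → ℝ`.
def descMul (x y : ι → ℝ) : ι → ℝ := π (mul (σ x) (σ y))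

variable {mul π σ}

theorem map_mul_eq_descMul (hπσ : ∀ x, π (σ x) = x)
    (hker : ∀ X Y u v, π u = 0 → π v = 0 → π (mul (X + u) (Y + v)) = π (mul X Y)) (X Y : g) :
    π (mul X Y) = descMul mul π σ (π X) (π Y) := by
  unfold descMul
  simpa using (hker X Y (σ (π X) - X) (σ (π Y) - Y) (by simp [hπσ]) (by simp [hπσ])).symm

def IsBCHMul.descend [Fintype ι] (hmul : IsBCHMul g mul) (hπσ : ∀ x, π (σ x) = x)
    (hker : ∀ X Y u v, π u = 0 → π v = 0 → π (mul (X + u) (Y + v)) = π (mul X Y)) :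
    PolyGroupLaw ι where
  mul := descMul mul π σ
  mul_assoc x y z := by
    have h := congrArg π (hmul.1 (σ x) (σ y) (σ z))
    rw [map_mul_eq_descMul hπσ hker, map_mul_eq_descMul hπσ hker (σ x) (mul (σ y) (σ z))] at h
    simp only [hπσ] at h
    exact h
  zero_mul x := by simp [descMul, hmul.2.1, hπσ]
  mul_zero x := by simp [descMul, hmul.2.2.1, hπσ]
  mul_neg_cancel x := by simp [descMul, hmul.2.2.2.1]
  smul_mul_smul t s x := by simp [descMul, hmul.2.2.2.2.1, hπσ]
  isPolyMap := by
    obtain ⟨d, b, -⟩ := hmul.2.2.2.2.2.1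
    have hσ : ∀ f : (ι ⊕ ι → ℝ) →ₗ[ℝ] ι → ℝ, IsPolyMap (b.equivFun ∘ fun z => σ (f z)) :=
      fun f => (b.equivFun.toLinearMap ∘ₗ σ ∘ₗ f).isPolyMap
    convert (π ∘ₗ b.equivFun.symm.toLinearMap).isPolyMap.comp
      (hmul.isPolyMap_mul b (hσ (LinearMap.funLeft ℝ ℝ Sum.inl))
        (hσ (LinearMap.funLeft ℝ ℝ Sum.inr))) using 1
    funext z
    simp [descMul, LinearMap.funLeft]

theorem IsBCHMul.descMul_smul_smul_sub (hmul : IsBCHMul g mul) (hπσ : ∀ x, π (σ x) = x)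
    (x y : ι → ℝ) :
    ∃ (N : ℕ) (c : ℕ → ι → ℝ), ∀ t : ℝ, descMul mul π σ (t • x) (t • y) - t • (x + y) =
      (t ^ 2 / 2) • π ⁅σ x, σ y⁆ + ∑ i ∈ Finset.range N, t ^ (i + 3) • c i := by
  obtain ⟨N, c, hc⟩ := hmul.2.2.2.2.2.2 (σ x) (σ y)
  refine ⟨N, fun i => π (c i), fun t => ?_⟩
  simp only [descMul, map_smul, hc, map_add, map_sum, hπσ]
  rw [smul_add]
  abel

theorem IsBCHMul.descMul_sub_mem_polyCurves_two (hmul : IsBCHMul g mul)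
    (hπσ : ∀ x, π (σ x) = x) (x y : ι → ℝ) :
    (fun t : ℝ => descMul mul π σ (t • x) (t • y) - t • (x + y)) ∈ polyCurves ι 2 := by
  obtain ⟨N, c, hc⟩ := hmul.descMul_smul_smul_sub hπσ x y
  convert add_mem (polyCurves.pow_smul_mem 2 ((2 : ℝ)⁻¹ • π ⁅σ x, σ y⁆))
    (polyCurves.antitone (by norm_num) (polyCurves.sum_pow_smul_mem 3 N c)) using 1
  funext t
  simp only [hc, Pi.add_apply, smul_smul, div_eq_mul_inv]

theorem IsBCHMul.descMul_sub_mem_polyCurves_three (hmul : IsBCHMul g mul)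
    (hπσ : ∀ x, π (σ x) = x) {x y : ι → ℝ} (hxy : π ⁅σ x, σ y⁆ = 0) :
    (fun t : ℝ => descMul mul π σ (t • x) (t • y) - t • (x + y)) ∈ polyCurves ι 3 := by
  obtain ⟨N, c, hc⟩ := hmul.descMul_smul_smul_sub hπσ x y
  convert polyCurves.sum_pow_smul_mem 3 N c using 1
  funext t
  rw [hc, hxy, smul_zero, zero_add]

end Descent

namespace Module.Basis

variable {R M : Type*} [Semiring R] [AddCommMonoid M] [Module R M] {m : ℕ}
  (b : Module.Basis (Fin m) R M)

-- The flag `F` of the statement.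
def natFlag (j : ℕ) : Submodule R M := Submodule.span R (b '' {i | (i : ℕ) < j})

theorem mem_natFlag_iff {j : ℕ} {w : M} :
    w ∈ b.natFlag j ↔ ∀ l : Fin m, j ≤ l → b.repr w l = 0 := by
  simp only [natFlag, b.mem_span_image, Set.subset_def, Finset.mem_coe, Finsupp.mem_support_iff,
    Set.mem_ofPred_eq]
  exact ⟨fun h l hl => by_contra fun h' => absurd (h l h') (not_lt.2 hl),
    fun h l hl => lt_of_not_ge fun h' => hl (h l h')⟩

theorem natFlag_mono : Monotone b.natFlag := fun _ _ hjk =>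
  Submodule.span_mono (Set.image_mono fun _ hi => lt_of_lt_of_le hi hjk)

theorem natFlag_zero : b.natFlag 0 = ⊥ := by simp [natFlag]

theorem natFlag_eq_top {j : ℕ} (h : m ≤ j) : b.natFlag j = ⊤ :=
  eq_top_iff.mpr fun _ _ => b.mem_natFlag_iff.mpr fun l hl => absurd (l.2.trans_le h) (not_lt.2 hl)

theorem basis_mem_natFlag {i : Fin m} {j : ℕ} (h : (i : ℕ) < j) : b i ∈ b.natFlag j :=
  Submodule.subset_span ⟨i, h, rfl⟩

variable (i : ℕ)

-- Coordinates on `M ⧸ b.natFlag i`; `natFlagSection` is a linear section of them.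
noncomputable def natFlagProj : M →ₗ[R] {l : Fin m // i ≤ l} → R :=
  LinearMap.funLeft R R Subtype.val ∘ₗ b.equivFun.toLinearMap

noncomputable def natFlagSection : ({l : Fin m // i ≤ l} → R) →ₗ[R] M :=
  Fintype.linearCombination R fun l => b l

@[simp]
theorem natFlagProj_apply (w : M) (l : {l : Fin m // i ≤ l}) : b.natFlagProj i w l = b.repr w l :=
  rfl

theorem natFlagProj_natFlagSection (x : {l : Fin m // i ≤ l} → R) :
    b.natFlagProj i (b.natFlagSection i x) = x := by
  funext l
  simp [natFlagSection, Fintype.linearCombination_apply, Finsupp.single_apply, Subtype.val_inj]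

theorem natFlagProj_eq_zero_iff {w : M} : b.natFlagProj i w = 0 ↔ w ∈ b.natFlag i := by
  rw [mem_natFlag_iff, funext_iff]
  exact ⟨fun h l hl => h ⟨l, hl⟩, fun h l => h l l.2⟩

theorem natFlagProj_eq_smul {i : ℕ} (hi : i < m) {w : M} (hw : w ∈ b.natFlag (i + 1)) :
    b.natFlagProj i w = b.repr w ⟨i, hi⟩ • b.natFlagProj i (b ⟨i, hi⟩) := by
  funext l
  by_cases hl : (l : Fin m) = ⟨i, hi⟩
  · simp [hl]
  · have hil : i + 1 ≤ (l : ℕ) := lt_of_le_of_ne l.2 fun h => hl (Fin.ext h.symm)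
    simp [Ne.symm hl, b.mem_natFlag_iff.mp hw l hil]

end Module.Basis

section JordanHolder

variable {g : Type*} [LieRing g] [LieAlgebra ℝ g] {mul : g → g → g} {m : ℕ}
  {b : Module.Basis (Fin m) ℝ g}

theorem IsBCHMul.mul_add_add_sub_mem_natFlag_of_compat (hmul : IsBCHMul g mul)
    (hJH : ∀ (j : ℕ) (Z : g), ∀ v ∈ b.natFlag (j + 1), ⁅Z, v⁆ ∈ b.natFlag j) {i : ℕ}
    (hcompat : ∀ X Y u v, u ∈ b.natFlag i → v ∈ b.natFlag i →
      mul (X + u) (Y + v) - mul X Y ∈ b.natFlag i)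
    {X Y u v : g} (hu : u ∈ b.natFlag (i + 1)) (hv : v ∈ b.natFlag (i + 1)) :
    mul (X + u) (Y + v) - (mul X Y + u + v) ∈ b.natFlag i := by
  by_cases hi : i < m
  swap
  · rw [b.natFlag_eq_top (not_lt.1 hi)]
    exact Submodule.mem_top
  set π := b.natFlagProj i
  set σ := b.natFlagSection i
  have hπσ : ∀ x, π (σ x) = x := b.natFlagProj_natFlagSection i
  have hker : ∀ X Y u v, π u = 0 → π v = 0 → π (mul (X + u) (Y + v)) = π (mul X Y) := by
    intro X Y u v hu hv
    rw [b.natFlagProj_eq_zero_iff] at hu hv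
    rw [← sub_eq_zero, ← map_sub, b.natFlagProj_eq_zero_iff]
    exact hcompat X Y u v hu hv
  let G := hmul.descend hπσ hker
  set e := π (b ⟨i, hi⟩)
  -- `σ e ∈ F (i + 1)`, so the Jordan–Hölder condition makes `e` central modulo `F i`.
  have hlie : ∀ x, π ⁅σ x, σ e⁆ = 0 := by
    have hσe : σ e ∈ b.natFlag (i + 1) := by
      have hdiff : σ e - b ⟨i, hi⟩ ∈ b.natFlag (i + 1) :=
        b.natFlag_mono i.le_succ ((b.natFlagProj_eq_zero_iff i).mp
          (by rw [map_sub]; exact sub_eq_zero.mpr (hπσ e)))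
      simpa using add_mem hdiff (b.basis_mem_natFlag (i := ⟨i, hi⟩) i.lt_succ_self)
    exact fun x => (b.natFlagProj_eq_zero_iff i).mpr (hJH i _ _ hσe)
  have hconj : ∀ x, G.conj x e = e := G.conj_eq_self
    (fun x => hmul.descMul_sub_mem_polyCurves_three hπσ (hlie x))
    (fun x => by
      have h := hmul.descMul_sub_mem_polyCurves_three hπσ (x := x + e) (y := -x) (by
        rw [map_add, map_neg, lie_neg, add_lie, lie_self, zero_add, ← lie_skew, neg_neg, hlie])
      rwa [add_neg_cancel_comm] at h)
  rw [← b.natFlagProj_eq_zero_iff, map_sub, map_add, map_add, map_mul_eq_descMul hπσ hker,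
    map_mul_eq_descMul hπσ hker X Y, map_add, map_add, b.natFlagProj_eq_smul hi hu,
    b.natFlagProj_eq_smul hi hv, sub_eq_zero]
  exact G.mul_add_smul_add_smul hconj (hmul.descMul_sub_mem_polyCurves_two hπσ) _ _ _ _

theorem IsBCHMul.mul_add_sub_mem_natFlag (hmul : IsBCHMul g mul)
    (hJH : ∀ (j : ℕ) (Z : g), ∀ v ∈ b.natFlag (j + 1), ⁅Z, v⁆ ∈ b.natFlag j) (i : ℕ) :
    ∀ X Y u v, u ∈ b.natFlag i → v ∈ b.natFlag i →
      mul (X + u) (Y + v) - mul X Y ∈ b.natFlag i := by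
  induction i with
  | zero =>
    intro X Y u v hu hv
    simp only [b.natFlag_zero, Submodule.mem_bot] at hu hv ⊢
    simp [hu, hv]
  | succ i ih =>
    intro X Y u v hu hv
    have h := hmul.mul_add_add_sub_mem_natFlag_of_compat hJH ih (X := X) (Y := Y) hu hv
    convert add_mem (add_mem (b.natFlag_mono i.le_succ h) hu) hv using 1
    abel

theorem IsBCHMul.mul_add_add_sub_mem_natFlag (hmul : IsBCHMul g mul)
    (hJH : ∀ (j : ℕ) (Z : g), ∀ v ∈ b.natFlag (j + 1), ⁅Z, v⁆ ∈ b.natFlag j) {i : ℕ}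
    {X Y u v : g} (hu : u ∈ b.natFlag (i + 1)) (hv : v ∈ b.natFlag (i + 1)) :
    mul (X + u) (Y + v) - (mul X Y + u + v) ∈ b.natFlag i :=
  hmul.mul_add_add_sub_mem_natFlag_of_compat hJH (hmul.mul_add_sub_mem_natFlag hJH i) hu hv

theorem IsBCHMul.foldr_ofFn_sub_mem_natFlag (hmul : IsBCHMul g mul)
    (hJH : ∀ (j : ℕ) (Z : g), ∀ v ∈ b.natFlag (j + 1), ⁅Z, v⁆ ∈ b.natFlag j) {j : ℕ} :
    ∀ {k : ℕ} (f f' : Fin k → g), (∀ r, f' r - f r ∈ b.natFlag (j + 1)) →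
      (List.ofFn f').foldr mul 0 - ((List.ofFn f).foldr mul 0 + ∑ r, (f' r - f r)) ∈ b.natFlag j
  | 0, f, f', _ => by simp
  | k + 1, f, f', h => by
    have ih := hmul.foldr_ofFn_sub_mem_natFlag hJH (fun r => f r.succ) (fun r => f' r.succ)
      fun r => h r.succ
    simp only [List.ofFn_succ, List.foldr_cons, Fin.sum_univ_succ]
    set W := (List.ofFn fun r => f r.succ).foldr mul 0
    set W' := (List.ofFn fun r => f' r.succ).foldr mul 0
    have hD : ∑ r : Fin k, (f' r.succ - f r.succ) ∈ b.natFlag (j + 1) :=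
      Submodule.sum_mem _ fun r _ => h r.succ
    have hW : W' - W ∈ b.natFlag (j + 1) := by
      convert add_mem (b.natFlag_mono j.le_succ ih) hD using 1
      abel
    have hstep := hmul.mul_add_add_sub_mem_natFlag hJH (X := f 0) (Y := W) (h 0) hW
    rw [add_sub_cancel, add_sub_cancel] at hstep
    convert add_mem hstep ih using 1
    abel

theorem IsBCHMul.isPolyMap_foldr_ofFn (hmul : IsBCHMul g mul) {κ μ : Type*} [Fintype κ]
    (b : Module.Basis κ ℝ g) :
    ∀ {k : ℕ} (f : Fin k → (μ → ℝ) → g), (∀ r, IsPolyMap (b.equivFun ∘ f r)) →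
      IsPolyMap (b.equivFun ∘ fun x => (List.ofFn fun r => f r x).foldr mul 0)
  | 0, f, _ => ⟨0, by simp⟩
  | k + 1, f, h => by
    simp only [List.ofFn_succ, List.foldr_cons]
    exact hmul.isPolyMap_mul b (h 0)
      (hmul.isPolyMap_foldr_ofFn b (fun r => f r.succ) fun r => h r.succ)

end JordanHolder

section Triangular

variable {m : ℕ} (P : Fin m → MvPolynomial (Fin m) ℝ)

noncomputable def triangularInv (j : Fin m) : MvPolynomial (Fin m) ℝ :=
  MvPolynomial.X j -
    MvPolynomial.bind₁ (fun i : Fin m => if (j : ℕ) < i then triangularInv i else 0) (P j)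
termination_by m - j
decreasing_by omega

variable {P}

theorem eval_triangularInv (hP : ∀ j, ∀ i ∈ (P j).vars, (j : ℕ) < i) (y : Fin m → ℝ)
    (j : Fin m) : MvPolynomial.eval y (triangularInv P j) =
      y j - MvPolynomial.eval (fun i => MvPolynomial.eval y (triangularInv P i)) (P j) := by
  rw [triangularInv, map_sub, MvPolynomial.eval_X, MvPolynomial.eval_bind₁]
  congr 1
  exact MvPolynomial.eval_congr_vars fun i hi => by rw [if_pos (hP j i hi)]

theorem eval_triangularInv_add (hP : ∀ j, ∀ i ∈ (P j).vars, (j : ℕ) < i) (t : Fin m → ℝ)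
    (j : Fin m) :
    MvPolynomial.eval (fun i => t i + MvPolynomial.eval t (P i)) (triangularInv P j) = t j := by
  rw [eval_triangularInv hP, MvPolynomial.eval_congr_vars (g := t) fun i hi =>
    have := hP j i hi
    eval_triangularInv_add hP t i]
  ring
termination_by m - j

theorem triangularInv_leftInverse (hP : ∀ j, ∀ i ∈ (P j).vars, (j : ℕ) < i) :
    Function.LeftInverse (fun y j => MvPolynomial.eval y (triangularInv P j))
      fun t j => t j + MvPolynomial.eval t (P j) :=
  fun t => funext (eval_triangularInv_add hP t)

theorem triangularInv_rightInverse (hP : ∀ j, ∀ i ∈ (P j).vars, (j : ℕ) < i) :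
    Function.RightInverse (fun y j => MvPolynomial.eval y (triangularInv P j))
      fun t j => t j + MvPolynomial.eval t (P j) :=
  fun y => funext fun j => by
    dsimp only
    rw [eval_triangularInv hP y j, sub_add_cancel]

end Triangular

section BlockProduct

variable {g : Type*} [LieRing g] [LieAlgebra ℝ g] {mul : g → g → g} {m k : ℕ}
  {b : Module.Basis (Fin m) ℝ g} {A : Fin k → Finset (Fin m)}

theorem IsBCHMul.repr_foldr_eq_add (hmul : IsBCHMul g mul)
    (hJH : ∀ (j : ℕ) (Z : g), ∀ v ∈ b.natFlag (j + 1), ⁅Z, v⁆ ∈ b.natFlag j)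
    (hdisj : ∀ r r' : Fin k, r ≠ r' → Disjoint (A r) (A r'))
    (hcover : ∀ i : Fin m, ∃ r, i ∈ A r) (t : Fin m → ℝ) (j : Fin m) :
    b.repr ((List.ofFn fun r => ∑ i ∈ A r, t i • b i).foldr mul 0) j =
      t j + b.repr ((List.ofFn fun r =>
        ∑ i ∈ A r, (if (j : ℕ) < i then t i else 0) • b i).foldr mul 0) j := by
  classical
  set s : Fin m → ℝ := fun i => if (j : ℕ) < i then t i else 0
  have hdiff : ∀ r, ∑ i ∈ A r, t i • b i - ∑ i ∈ A r, s i • b i = ∑ i ∈ A r, (t - s) i • b i :=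
    fun r => by simp [sub_smul, Finset.sum_sub_distrib]
  have hmem : ∀ r, ∑ i ∈ A r, t i • b i - ∑ i ∈ A r, s i • b i ∈ b.natFlag (j + 1) := by
    intro r
    rw [hdiff]
    refine Submodule.sum_mem _ fun i _ => ?_
    by_cases hji : (j : ℕ) < i
    · simp only [s, Pi.sub_apply, if_pos hji, sub_self, zero_smul]
      exact zero_mem _
    · exact Submodule.smul_mem _ _ (b.basis_mem_natFlag (by omega))
  have hpartition : ∑ r, ∑ i ∈ A r, (t - s) i • b i = ∑ i, (t - s) i • b i := by
    rw [← Finset.sum_biUnion fun r _ r' _ hrr' => hdisj r r' hrr']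
    congr
    exact Finset.eq_univ_of_forall fun i => Finset.mem_biUnion.mpr <| by simpa using hcover i
  have h := hmul.foldr_ofFn_sub_mem_natFlag hJH _ _ hmem
  simp only [hdiff, hpartition] at h
  have hj := b.mem_natFlag_iff.mp h j le_rfl
  simp only [map_sub, map_add, Finsupp.sub_apply, Finsupp.add_apply, b.repr_sum_self] at hj
  simp only [s, Pi.sub_apply, lt_irrefl, if_false, sub_zero] at hj
  linarith

theorem IsBCHMul.exists_repr_foldr_eq_add (hmul : IsBCHMul g mul)
    (hJH : ∀ (j : ℕ) (Z : g), ∀ v ∈ b.natFlag (j + 1), ⁅Z, v⁆ ∈ b.natFlag j)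
    (hdisj : ∀ r r' : Fin k, r ≠ r' → Disjoint (A r) (A r'))
    (hcover : ∀ i : Fin m, ∃ r, i ∈ A r) :
    ∃ P : Fin m → MvPolynomial (Fin m) ℝ, (∀ j, ∀ i ∈ (P j).vars, (j : ℕ) < i) ∧
      ∀ t j, b.repr ((List.ofFn fun r => ∑ i ∈ A r, t i • b i).foldr mul 0) j =
        t j + MvPolynomial.eval t (P j) := by
  classical
  obtain ⟨S, hS⟩ := hmul.isPolyMap_foldr_ofFn b (fun r t => ∑ i ∈ A r, t i • b i) fun r => by
    convert (b.equivFun.toLinearMap ∘ₗ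
      ∑ i ∈ A r, (LinearMap.proj i : (Fin m → ℝ) →ₗ[ℝ] ℝ).smulRight (b i)).isPolyMap using 1
    funext t
    simp
  refine ⟨fun j => MvPolynomial.bind₁
    (fun i : Fin m => if (j : ℕ) < i then MvPolynomial.X i else 0) (S j), fun j i hi => ?_,
    fun t j => ?_⟩
  · obtain ⟨i', -, hi'⟩ := MvPolynomial.mem_vars_bind₁ _ _ hi
    split_ifs at hi' with h
    · rw [MvPolynomial.vars_X, Finset.mem_singleton] at hi'
      exact hi' ▸ h
    · simp at hi'
  · have hs : (fun i : Fin m => MvPolynomial.eval t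
        (if (j : ℕ) < i then MvPolynomial.X i else 0)) =
          fun i : Fin m => if (j : ℕ) < i then t i else 0 :=
      funext fun i => by split_ifs <;> simp
    rw [hmul.repr_foldr_eq_add hJH hdisj hcover t j, MvPolynomial.eval_bind₁, hs, ← hS]
    rfl

end BlockProduct

theorem stmt_16_general {g : Type*} [LieRing g] [LieAlgebra ℝ g]
    (mul : g → g → g) (hmul : IsBCHMul g mul)
    (m : ℕ) (b : Module.Basis (Fin m) ℝ g)
    (F : ℕ → Submodule ℝ g)
    (hF : ∀ j, F j = Submodule.span ℝ (⇑b '' {i : Fin m | (i : ℕ) < j}))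
    (hJH : ∀ (j : ℕ) (Z : g), ∀ v ∈ F (j + 1), ⁅Z, v⁆ ∈ F j)
    (k : ℕ) (A : Fin k → Finset (Fin m))
    (hdisj : ∀ r r' : Fin k, r ≠ r' → Disjoint (A r) (A r'))
    (hcover : ∀ i : Fin m, ∃ r, i ∈ A r)
    (Φ : (Fin m → ℝ) → g)
    (hΦ : ∀ t, Φ t = (List.ofFn fun r : Fin k => ∑ j ∈ A r, t j • b j).foldr mul 0) :
    (∃ P : Fin m → MvPolynomial (Fin m) ℝ,
      (∀ (j : Fin m), ∀ i ∈ (P j).vars, (j : ℕ) < (i : ℕ)) ∧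
      ∀ t : Fin m → ℝ, Φ t = ∑ j, (t j + MvPolynomial.eval t (P j)) • b j) ∧
    Function.Bijective Φ ∧
    ∃ q : Fin m → MvPolynomial (Fin m) ℝ,
      ∀ (Y : g) (j : Fin m),
        Function.invFun Φ Y j = MvPolynomial.eval (fun i => b.repr Y i) (q j) := by
  obtain rfl : F = b.natFlag := funext hF
  obtain ⟨P, hPvars, hrepr⟩ := hmul.exists_repr_foldr_eq_add hJH hdisj hcover
  have hΦP : ∀ t, Φ t = b.equivFun.symm fun j => t j + MvPolynomial.eval t (P j) := fun t => by
    rw [← funext (hrepr t), ← hΦ, ← b.equivFun_apply, LinearEquiv.symm_apply_apply]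
  set ψ : g → Fin m → ℝ := fun Y j => MvPolynomial.eval (fun i => b.repr Y i) (triangularInv P j)
  have hleft : Function.LeftInverse ψ Φ := fun t => by
    simp only [ψ, hΦP, ← b.equivFun_apply, LinearEquiv.apply_symm_apply]
    exact triangularInv_leftInverse hPvars t
  have hright : Function.RightInverse ψ Φ := fun Y => by
    rw [hΦP]
    exact (congrArg b.equivFun.symm (triangularInv_rightInverse hPvars (b.equivFun Y))).trans
      (b.equivFun.symm_apply_apply Y)
  have hbij : Function.Bijective Φ := ⟨hleft.injective, hright.surjective⟩
  refine ⟨⟨P, hPvars, fun t => by rw [hΦP, b.equivFun_symm_apply]⟩, hbij, triangularInv P,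
    fun Y j => ?_⟩
  rw [hbij.1 ((Function.invFun_eq ⟨ψ Y, hright Y⟩).trans (hright Y).symm)]

/-- Let `g` be a nilpotent Lie algebra with Jordan–Hölder basis
`b` (flag `Fⱼ = span{b₀,…,b_{j-1}}`, `[g, Fⱼ₊₁] ⊆ Fⱼ`), and let
`{0,…,m-1} = A₀ ⊔ ⋯ ⊔ A_{k-1}` be a partition. Define
`Φ(t) = (Σ_{j∈A₀} tⱼbⱼ) · ⋯ · (Σ_{j∈A_{k-1}} tⱼbⱼ)` via the BCH product.
Then there are polynomials `Pⱼ` depending only on the variables after `j` with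
`Φ(t) = Σⱼ (tⱼ + Pⱼ(t)) bⱼ`; in particular `Φ` is a bijection with polynomial
inverse. -/
theorem stmt_16 {g : Type*} [LieRing g] [LieAlgebra ℝ g] [FiniteDimensional ℝ g]
    (hnilp : ∃ k, LieModule.lowerCentralSeries ℝ g g k = ⊥)
    (mul : g → g → g) (hmul : IsBCHMul g mul)
    (m : ℕ) (b : Module.Basis (Fin m) ℝ g)
    (F : ℕ → Submodule ℝ g)
    (hF : ∀ j, F j = Submodule.span ℝ (⇑b '' {i : Fin m | (i : ℕ) < j}))
    (hJH : ∀ (j : ℕ) (Z : g), ∀ v ∈ F (j + 1), ⁅Z, v⁆ ∈ F j)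
    (k : ℕ) (A : Fin k → Finset (Fin m))
    (hdisj : ∀ r r' : Fin k, r ≠ r' → Disjoint (A r) (A r'))
    (hcover : ∀ i : Fin m, ∃ r, i ∈ A r)
    (Φ : (Fin m → ℝ) → g)
    (hΦ : ∀ t, Φ t = (List.ofFn fun r : Fin k => ∑ j ∈ A r, t j • b j).foldr mul 0) :
    (∃ P : Fin m → MvPolynomial (Fin m) ℝ,
      (∀ (j : Fin m), ∀ i ∈ (P j).vars, (j : ℕ) < (i : ℕ)) ∧
      ∀ t : Fin m → ℝ, Φ t = ∑ j, (t j + MvPolynomial.eval t (P j)) • b j) ∧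
    Function.Bijective Φ ∧
    ∃ q : Fin m → MvPolynomial (Fin m) ℝ,
      ∀ (Y : g) (j : Fin m),
        Function.invFun Φ Y j = MvPolynomial.eval (fun i => b.repr Y i) (q j) :=
  stmt_16_general mul hmul m b F hF hJH k A hdisj hcover Φ hΦ
end
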